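/- Let h: ℝⁿ → [0,1] be measurable and define H(x) = E_{ε ~ N(0, σ²I)}[h(x + ε)]. Then the function x ↦ σ·Φ⁻¹(H(x)) is 1-Lipschitz with respect to the Euclidean norm, where Φ⁻¹ is the inverse standard Gaussian CDF (taking values in the extended reals, with the Lipschitz bound interpreted on points where H(x) ∈ (0,1)). -/

import Mathlib

open MeasureTheory ProbabilityTheory

/-- The isotropic Gaussian measure `N(0, σ²I)` on `ℝⁿ` (as `EuclideanSpace`). -/
noncomputable def gaussMeasure (n : ℕ) (σ : ℝ) : Measure (EuclideanSpace ℝ (Fin n)) :=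
  (Measure.pi fun _ : Fin n => gaussianReal 0 (σ ^ 2).toNNReal).map
    (EuclideanSpace.equiv (Fin n) ℝ).symm

/-- The standard Gaussian cumulative distribution function `Φ`. -/
noncomputable def stdGaussCDF : ℝ → ℝ := fun t => cdf (gaussianReal 0 1) t

/-- The inverse `Φ⁻¹` of the standard Gaussian CDF. -/
noncomputable def stdGaussCDFInv : ℝ → ℝ := Function.invFun stdGaussCDF

/-!
Write `γ = N(0, σ²I)`, `v = x - y` and `Φ α = H y`. By the Cameron–Martin formula,
`H x = ∫ h (y + ε) L ε dγ` with likelihood ratio `L ε = exp ((⟪v, ε⟫ - ‖v‖² / 2) / σ²)`.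
Among functions `g` with values in `[0, 1]` and `∫ g dγ = H y`, the integral `∫ g L dγ` is
smallest (Neyman–Pearson) for the indicator of the half-space `{ε | ⟪v, ε⟫ ≤ σ ‖v‖ α}`, on which
`L` stays below its value on the boundary. That half-space has `γ`-measure `Φ α`, and its
translate by `-v` has `γ`-measure `Φ (α - ‖v‖ / σ)`. Hence `Φ (α - ‖v‖ / σ) ≤ H x`, that is
`σ Φ⁻¹ (H y) - σ Φ⁻¹ (H x) ≤ ‖x - y‖`; exchange `x` and `y` for the other half.
-/

open Real Set Module Complex GaussianFourier
open scoped ENNReal NNReal RealInnerProductSpace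

theorem continuous_gaussianPDFReal (μ : ℝ) (v : ℝ≥0) : Continuous (gaussianPDFReal μ v) := by
  unfold gaussianPDFReal; fun_prop

theorem stdGaussCDF_sub_stdGaussCDF (s t : ℝ) :
    stdGaussCDF t - stdGaussCDF s = ∫ x in s..t, gaussianPDFReal 0 1 x := by
  wlog hst : s ≤ t generalizing s t
  · rw [intervalIntegral.integral_symm, ← this t s (le_of_not_ge hst), neg_sub]
  rw [stdGaussCDF, stdGaussCDF, intervalIntegral.integral_of_le hst,
    ← ENNReal.ofReal_eq_ofReal_iff (sub_nonneg.2 (monotone_cdf _ hst))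
      (setIntegral_nonneg measurableSet_Ioc fun x _ => gaussianPDFReal_nonneg 0 1 x),
    ← gaussianReal_apply_eq_integral 0 one_ne_zero, ← StieltjesFunction.measure_Ioc, measure_cdf]

theorem hasDerivAt_stdGaussCDF (t : ℝ) :
    HasDerivAt stdGaussCDF (gaussianPDFReal 0 1 t) t := by
  have : stdGaussCDF = fun u => stdGaussCDF t + ∫ x in t..u, gaussianPDFReal 0 1 x := by
    ext u; rw [← stdGaussCDF_sub_stdGaussCDF]; ring
  rw [this]
  exact ((continuous_gaussianPDFReal 0 1).integral_hasStrictDerivAt t t).hasDerivAt.const_add _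

theorem strictMono_stdGaussCDF : StrictMono stdGaussCDF :=
  strictMono_of_hasDerivAt_pos hasDerivAt_stdGaussCDF
    fun t => gaussianPDFReal_pos 0 1 t one_ne_zero

theorem continuous_stdGaussCDF : Continuous stdGaussCDF :=
  continuous_iff_continuousAt.2 fun t => (hasDerivAt_stdGaussCDF t).continuousAt

theorem stdGaussCDF_stdGaussCDFInv {p : ℝ} (hp : p ∈ Ioo 0 1) :
    stdGaussCDF (stdGaussCDFInv p) = p := by
  refine Function.invFun_eq ?_
  obtain ⟨a, ha⟩ := ((tendsto_cdf_atBot (μ := gaussianReal 0 1)).eventually_lt_const hp.1).exists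
  obtain ⟨b, hb⟩ := ((tendsto_cdf_atTop (μ := gaussianReal 0 1)).eventually_const_lt hp.2).exists
  exact intermediate_value_univ a b continuous_stdGaussCDF ⟨ha.le, hb.le⟩

theorem gaussianReal_Iic_eq_ofReal_stdGaussCDF {s : ℝ} (hs : 0 < s) (a : ℝ) :
    gaussianReal 0 (s ^ 2).toNNReal (Iic a) = ENNReal.ofReal (stdGaussCDF (a / s)) := by
  have hmap := gaussianReal_map_const_mul (μ := 0) (v := 1) s
  rw [mul_zero, mul_one,
    show NNReal.mk (s ^ 2) (sq_nonneg s) = (s ^ 2).toNNReal by ext; simp [sq_nonneg]] at hmap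
  rw [← hmap, Measure.map_apply (measurable_const_mul s) measurableSet_Iic, stdGaussCDF,
    ofReal_cdf]
  congr 1
  ext x
  simp [le_div_iff₀' hs]

theorem setLIntegral_le_lintegral_mul_of_measure_eq {α : Type*} [MeasurableSpace α]
    {μ : Measure α} [IsFiniteMeasure μ] {f L : α → ℝ≥0∞} {s : Set α} {c : ℝ≥0∞}
    (hf : Measurable f) (hf1 : ∀ x, f x ≤ 1) (hs : MeasurableSet s) (hc : c ≠ ∞)
    (hLs : ∀ x ∈ s, L x ≤ c) (hLsc : ∀ x ∉ s, c ≤ L x) (hμs : μ s = ∫⁻ x, f x ∂μ) :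
    ∫⁻ x in s, L x ∂μ ≤ ∫⁻ x, f x * L x ∂μ := by
  -- `(1_s - f) (L - c) ≤ 0` pointwise, rearranged so that no subtraction occurs in `ℝ≥0∞`
  have hpoint : ∀ x, s.indicator L x + c * f x ≤ f x * L x + c * s.indicator 1 x := by
    intro x
    by_cases hx : x ∈ s
    · rw [indicator_of_mem hx, indicator_of_mem hx, Pi.one_apply, mul_one]
      obtain ⟨r, hr⟩ : ∃ r, f x + r = 1 := ⟨1 - f x, add_tsub_cancel_of_le (hf1 x)⟩
      calc L x + c * f x = (f x + r) * L x + c * f x := by rw [hr, one_mul]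
        _ = f x * L x + (r * L x + c * f x) := by ring
        _ ≤ f x * L x + (r * c + c * f x) := by gcongr; exact hLs x hx
        _ = f x * L x + c * (f x + r) := by ring
        _ = f x * L x + c := by rw [hr, mul_one]
    · rw [indicator_of_notMem hx, indicator_of_notMem hx, zero_add, mul_zero, add_zero,
        mul_comm c]
      gcongr
      exact hLsc x hx
  have hint := lintegral_mono (μ := μ) hpoint
  rw [lintegral_add_right _ (hf.const_mul c), lintegral_add_right _
    ((measurable_one.indicator hs).const_mul c), lintegral_const_mul _ hf,
    lintegral_const_mul _ (measurable_one.indicator hs), lintegral_indicator hs,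
    lintegral_indicator_one hs, hμs] at hint
  exact (ENNReal.add_le_add_iff_right (ENNReal.mul_ne_top hc (hμs ▸ measure_ne_top μ s))).1 hint

section InnerProductSpace

variable {V : Type*} [NormedAddCommGroup V] [InnerProductSpace ℝ V]

noncomputable def isotropicGaussianPDFReal (σ : ℝ) (x : V) : ℝ :=
  ((2 * π * σ ^ 2) ^ (finrank ℝ V / 2 : ℝ))⁻¹ * rexp (-‖x‖ ^ 2 / (2 * σ ^ 2))

noncomputable def cameronMartinDensity (σ : ℝ) (v x : V) : ℝ :=
  rexp ((⟪v, x⟫ - ‖v‖ ^ 2 / 2) / σ ^ 2)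

theorem continuous_cameronMartinDensity (σ : ℝ) (v : V) :
    Continuous (cameronMartinDensity σ v) := by
  unfold cameronMartinDensity; fun_prop

theorem isotropicGaussianPDFReal_nonneg (σ : ℝ) (x : V) : 0 ≤ isotropicGaussianPDFReal σ x := by
  unfold isotropicGaussianPDFReal; positivity

theorem continuous_isotropicGaussianPDFReal (σ : ℝ) :
    Continuous (isotropicGaussianPDFReal (V := V) σ) := by
  unfold isotropicGaussianPDFReal; fun_prop

theorem isotropicGaussianPDFReal_sub (σ : ℝ) (x v : V) :
    isotropicGaussianPDFReal σ (x - v) =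
      isotropicGaussianPDFReal σ x * cameronMartinDensity σ v x := by
  simp only [isotropicGaussianPDFReal, cameronMartinDensity]
  rw [mul_assoc _ (rexp _), ← Real.exp_add, norm_sub_sq_real, real_inner_comm]
  by_cases hσ : σ = 0
  · simp [hσ]
  congr 2
  field_simp
  ring

variable [FiniteDimensional ℝ V] [MeasurableSpace V] [BorelSpace V]

theorem integrable_isotropicGaussianPDFReal {σ : ℝ} (hσ : σ ≠ 0) :
    Integrable (isotropicGaussianPDFReal (V := V) σ) := by
  have hb : 0 < ((1 / (2 * σ ^ 2) : ℝ) : ℂ).re := by simp only [ofReal_re]; positivity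
  refine ((integrable_cexp_neg_mul_sq_norm_add hb 0 (0 : V)).norm.const_mul
    ((2 * π * σ ^ 2) ^ (finrank ℝ V / 2 : ℝ))⁻¹).congr (ae_of_all _ fun x => ?_)
  dsimp only
  have : -((1 / (2 * σ ^ 2) : ℝ) : ℂ) * ‖x‖ ^ 2 + 0 * ⟪(0 : V), x⟫ =
      ((-‖x‖ ^ 2 / (2 * σ ^ 2) : ℝ) : ℂ) := by push_cast; ring
  rw [Complex.norm_exp, this, ofReal_re, isotropicGaussianPDFReal]

theorem charFun_withDensity_isotropicGaussianPDFReal {σ : ℝ} (hσ : σ ≠ 0) (t : V) :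
    charFun (volume.withDensity fun x => ENNReal.ofReal (isotropicGaussianPDFReal σ x)) t =
      cexp (-(σ ^ 2 * ‖t‖ ^ 2) / 2) := by
  have hb : 0 < ((1 / (2 * σ ^ 2) : ℝ) : ℂ).re := by simp only [ofReal_re]; positivity
  rw [charFun_apply, integral_withDensity_eq_integral_toReal_smul
    (continuous_isotropicGaussianPDFReal σ).measurable.ennreal_ofReal
    (ae_of_all _ fun _ => ENNReal.ofReal_lt_top)]
  have : ∀ x : V, (ENNReal.ofReal (isotropicGaussianPDFReal σ x)).toReal • cexp (⟪x, t⟫ * I) =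
      ((((2 * π * σ ^ 2) ^ (finrank ℝ V / 2 : ℝ))⁻¹ : ℝ) : ℂ) *
        cexp (-((1 / (2 * σ ^ 2) : ℝ) : ℂ) * ‖x‖ ^ 2 + I * ⟪t, x⟫) := by
    intro x
    rw [ENNReal.toReal_ofReal (isotropicGaussianPDFReal_nonneg σ x), isotropicGaussianPDFReal,
      Complex.real_smul, ofReal_mul, mul_assoc, ofReal_exp, ← Complex.exp_add, real_inner_comm]
    congr 2
    push_cast
    ring
  simp_rw [this]
  rw [integral_const_mul, integral_cexp_neg_mul_sq_norm_add hb, ← mul_assoc]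
  have h2πσ : (π : ℂ) / ((1 / (2 * σ ^ 2) : ℝ) : ℂ) = ((2 * π * σ ^ 2 : ℝ) : ℂ) := by
    push_cast; field_simp
  rw [h2πσ, ← ofReal_natCast, ← ofReal_ofNat, ← ofReal_div,
    ← ofReal_cpow (by positivity), ← ofReal_mul, inv_mul_cancel₀ (by positivity), ofReal_one,
    one_mul]
  congr 1
  push_cast
  field_simp
  rw [I_sq]
  ring

variable (V) in
noncomputable def isotropicGaussian (σ : ℝ) : Measure V := (stdGaussian V).map (σ • ·)

instance (σ : ℝ) : IsProbabilityMeasure (isotropicGaussian V σ) :=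
  Measure.isProbabilityMeasure_map (by fun_prop)

theorem isotropicGaussian_eq_withDensity {σ : ℝ} (hσ : σ ≠ 0) :
    isotropicGaussian V σ =
      volume.withDensity fun x => ENNReal.ofReal (isotropicGaussianPDFReal σ x) := by
  have := isFiniteMeasure_withDensity_ofReal (integrable_isotropicGaussianPDFReal (V := V) hσ).2
  refine Measure.ext_of_charFun (funext fun t => ?_)
  rw [isotropicGaussian, charFun_map_smul, charFun_stdGaussian,
    charFun_withDensity_isotropicGaussianPDFReal hσ, norm_smul, ← ofReal_pow, mul_pow,
    Real.norm_eq_abs, sq_abs]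
  push_cast
  ring

theorem isotropicGaussian_map_add_right {σ : ℝ} (hσ : σ ≠ 0) (v : V) :
    (isotropicGaussian V σ).map (· + v) = (isotropicGaussian V σ).withDensity
      fun x => ENNReal.ofReal (cameronMartinDensity σ v x) := by
  have hρ : Measurable fun x : V => ENNReal.ofReal (isotropicGaussianPDFReal σ x) :=
    (continuous_isotropicGaussianPDFReal σ).measurable.ennreal_ofReal
  rw [isotropicGaussian_eq_withDensity hσ,
    ← withDensity_mul _ hρ (continuous_cameronMartinDensity σ v).measurable.ennreal_ofReal]
  ext s hs
  have hshift := (measurePreserving_add_right volume v).setLIntegral_comp_preimage hs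
    (hρ.comp (measurable_sub_const v))
  simp only [Function.comp_def, add_sub_cancel_right] at hshift
  rw [Measure.map_apply (measurable_add_const v) hs, withDensity_apply _ (hs.preimage
    (measurable_add_const v)), withDensity_apply _ hs, hshift]
  refine setLIntegral_congr_fun hs fun y _ => ?_
  rw [Pi.mul_apply, isotropicGaussianPDFReal_sub,
    ENNReal.ofReal_mul (isotropicGaussianPDFReal_nonneg σ y)]

theorem stdGaussian_map_inner (w : V) :
    (stdGaussian V).map (fun x => ⟪w, x⟫) = gaussianReal 0 (‖w‖ ^ 2).toNNReal := by
  have := IsGaussian.map_eq_gaussianReal (μ := stdGaussian V) (innerSL ℝ w)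
  rwa [integral_strongDual_stdGaussian, variance_dual_stdGaussian, innerSL_apply_norm] at this

theorem isotropicGaussian_setOf_inner_le {σ : ℝ} (hσ : 0 < σ) {v : V} (hv : v ≠ 0) (a : ℝ) :
    isotropicGaussian V σ {x | ⟪v, x⟫ ≤ a} = ENNReal.ofReal (stdGaussCDF (a / (σ * ‖v‖))) := by
  have hpre : (σ • · : V → V) ⁻¹' {x | ⟪v, x⟫ ≤ a} = (fun x => ⟪σ • v, x⟫) ⁻¹' Iic a := by
    ext x; simp [inner_smul_left, inner_smul_right]
  rw [isotropicGaussian, Measure.map_apply (by fun_prop)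
      (measurableSet_le (by fun_prop) (by fun_prop)), hpre,
    ← Measure.map_apply (by fun_prop) measurableSet_Iic, stdGaussian_map_inner,
    ← gaussianReal_Iic_eq_ofReal_stdGaussCDF (by positivity), norm_smul, Real.norm_of_nonneg hσ.le]

theorem ofReal_stdGaussCDF_sub_le_lintegral_add {σ : ℝ} (hσ : 0 < σ) {g : V → ℝ≥0∞}
    (hg : Measurable g) (hg1 : ∀ x, g x ≤ 1) {α : ℝ}
    (hα : ENNReal.ofReal (stdGaussCDF α) = ∫⁻ x, g x ∂isotropicGaussian V σ) (v : V) :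
    ENNReal.ofReal (stdGaussCDF (α - ‖v‖ / σ)) ≤ ∫⁻ x, g (x + v) ∂isotropicGaussian V σ := by
  rcases eq_or_ne v 0 with rfl | hv
  · simp [hα]
  set γ := isotropicGaussian V σ
  set τ := σ * ‖v‖ * α
  set L := fun x => ENNReal.ofReal (cameronMartinDensity σ v x)
  set c := ENNReal.ofReal (rexp ((τ - ‖v‖ ^ 2 / 2) / σ ^ 2))
  have hA : MeasurableSet {x : V | ⟪v, x⟫ ≤ τ} := measurableSet_le (by fun_prop) (by fun_prop)
  have hγA : γ {x | ⟪v, x⟫ ≤ τ} = ∫⁻ x, g x ∂γ := by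
    rw [isotropicGaussian_setOf_inner_le hσ hv, mul_div_cancel_left₀ α (by positivity), hα]
  have hL_le : ∀ x ∈ {x : V | ⟪v, x⟫ ≤ τ}, L x ≤ c :=
    fun x hx => by unfold L c cameronMartinDensity; gcongr; exact hx
  have hL_ge : ∀ x ∉ {x : V | ⟪v, x⟫ ≤ τ}, c ≤ L x :=
    fun x hx => by unfold L c cameronMartinDensity; gcongr; exact (not_le.1 hx).le
  have hshift : (· + v) ⁻¹' {x | ⟪v, x⟫ ≤ τ} = {x | ⟪v, x⟫ ≤ τ - ‖v‖ ^ 2} := by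
    ext x
    simp only [mem_preimage, mem_ofPred_eq, inner_add_right, real_inner_self_eq_norm_sq]
    constructor <;> intro <;> linarith
  calc ENNReal.ofReal (stdGaussCDF (α - ‖v‖ / σ))
      = γ ((· + v) ⁻¹' {x | ⟪v, x⟫ ≤ τ}) := by
        rw [hshift, isotropicGaussian_setOf_inner_le hσ hv]
        congr 2
        field_simp
        ring
    _ = ∫⁻ x in {x | ⟪v, x⟫ ≤ τ}, L x ∂γ := by
        rw [← Measure.map_apply (measurable_add_const v) hA,
          isotropicGaussian_map_add_right hσ.ne', withDensity_apply _ hA]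
    _ ≤ ∫⁻ x, g x * L x ∂γ := setLIntegral_le_lintegral_mul_of_measure_eq hg hg1 hA
        ENNReal.ofReal_ne_top hL_le hL_ge hγA
    _ = ∫⁻ x, g (x + v) ∂γ := by
        rw [← lintegral_map hg (measurable_add_const v), isotropicGaussian_map_add_right hσ.ne',
          lintegral_withDensity_eq_lintegral_mul _
            (continuous_cameronMartinDensity σ v).measurable.ennreal_ofReal hg]
        exact lintegral_congr fun x => mul_comm _ _

theorem mul_stdGaussCDFInv_integral_sub_le {σ : ℝ} (hσ : 0 < σ) {h : V → ℝ}
    (hmeas : Measurable h) (hbd : ∀ x, h x ∈ Icc (0 : ℝ) 1) {x y : V}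
    (hx : ∫ ε, h (x + ε) ∂isotropicGaussian V σ ∈ Ioo 0 1)
    (hy : ∫ ε, h (y + ε) ∂isotropicGaussian V σ ∈ Ioo 0 1) :
    σ * stdGaussCDFInv (∫ ε, h (y + ε) ∂isotropicGaussian V σ) -
      σ * stdGaussCDFInv (∫ ε, h (x + ε) ∂isotropicGaussian V σ) ≤ ‖x - y‖ := by
  have hlin : ∀ z, ENNReal.ofReal (∫ ε, h (z + ε) ∂isotropicGaussian V σ) =
      ∫⁻ ε, ENNReal.ofReal (h (z + ε)) ∂isotropicGaussian V σ := fun z =>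
    ofReal_integral_eq_lintegral_ofReal
      (.of_bound (hmeas.comp (measurable_const_add z)).aestronglyMeasurable 1
        (ae_of_all _ fun ε => by rw [Real.norm_of_nonneg (hbd _).1]; exact (hbd _).2))
      (ae_of_all _ fun ε => (hbd _).1)
  have key := ofReal_stdGaussCDF_sub_le_lintegral_add hσ
    (g := fun ε => ENNReal.ofReal (h (y + ε))) (hmeas.comp (measurable_const_add y)).ennreal_ofReal
    (fun ε => ENNReal.ofReal_le_one.2 (hbd _).2)
    (by rw [stdGaussCDF_stdGaussCDFInv hy, hlin]) (x - y)
  simp_rw [show ∀ ε, y + (ε + (x - y)) = x + ε from fun ε => by abel] at key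
  rw [← hlin, ENNReal.ofReal_le_ofReal_iff hx.1.le, ← stdGaussCDF_stdGaussCDFInv hx,
    strictMono_stdGaussCDF.le_iff_le] at key
  have := mul_le_mul_of_nonneg_left key hσ.le
  rw [mul_sub, mul_div_cancel₀ _ hσ.ne'] at this
  linarith

end InnerProductSpace

theorem gaussMeasure_eq_isotropicGaussian (n : ℕ) (σ : ℝ) :
    gaussMeasure n σ = isotropicGaussian (EuclideanSpace ℝ (Fin n)) σ := by
  have hscale : gaussianReal 0 (σ ^ 2).toNNReal = (gaussianReal 0 1).map (σ * ·) := by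
    rw [gaussianReal_map_const_mul]
    congr 1
    · simp
    · ext; simp [sq_nonneg]
  rw [gaussMeasure, isotropicGaussian, ← map_pi_eq_stdGaussian,
    Measure.map_map (by fun_prop) (by fun_prop)]
  simp_rw [hscale]
  rw [← Measure.pi_map_pi (fun _ => by fun_prop), Measure.map_map (by fun_prop) (by fun_prop)]
  rfl

theorem smoothed_phiinv_lipschitz
    (n : ℕ) (σ : ℝ) (hσ : 0 < σ)
    (h : EuclideanSpace ℝ (Fin n) → ℝ) (hmeas : Measurable h)
    (hbd : ∀ x, h x ∈ Set.Icc (0 : ℝ) 1)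
    (H : EuclideanSpace ℝ (Fin n) → ℝ)
    (hH : ∀ x, H x = ∫ ε, h (x + ε) ∂(gaussMeasure n σ)) :
    ∀ x y : EuclideanSpace ℝ (Fin n),
      H x ∈ Set.Ioo (0 : ℝ) 1 → H y ∈ Set.Ioo (0 : ℝ) 1 →
      |σ * stdGaussCDFInv (H x) - σ * stdGaussCDFInv (H y)| ≤ ‖x - y‖ := by
  intro x y hx hy
  simp only [hH, gaussMeasure_eq_isotropicGaussian] at hx hy ⊢
  rw [abs_sub_le_iff]
  exact ⟨norm_sub_rev x y ▸ mul_stdGaussCDFInv_integral_sub_le hσ hmeas hbd hy hx,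
    mul_stdGaussCDFInv_integral_sub_le hσ hmeas hbd hx hy⟩
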